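/- Let 𝓙 ⊆ 𝒫(V) be a nonempty antichain of nonempty subsets of V, let I ⊆ V be such that no J ∈ 𝓙 satisfies J ⊆ I, let B ∈ 𝒞_I, and let f : X → ℝ be bounded and measurable. Then ‖f·1_B‖_{U^{V,𝓙}} ≤ ‖f‖_{U^{V,𝓙}}. -/

import Mathlib

open MeasureTheory
open scoped Classical

noncomputable section

/-- Recombine `(x_{V∖J}, x_J^ω)` into a point of `X = ∏_v X_v`. -/
def recomb {V : Type} (X : V → Type) (J : Set V)
    (y : ∀ v : ↥(Jᶜ : Set V), X ↑v) (z : ∀ p : ↥J × Bool, X ↑p.1)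
    (ω : ↥J → Bool) : ∀ v, X v := fun v =>
  if h : v ∈ J then z (⟨v, h⟩, ω ⟨v, h⟩) else y ⟨v, h⟩

/-- The integral `∫_{X⁺_J} ∏_{ω ∈ {0,1}^J} f(x_{V∖J}, x_J^ω) dμ⁺_J`. -/
def UJint {V : Type} [Fintype V] [DecidableEq V] (X : V → Type)
    [∀ v, MeasurableSpace (X v)] (μ : ∀ v, Measure (X v)) (J : Set V)
    (f : (∀ v, X v) → ℝ) : ℝ :=
  ∫ p : (∀ v : ↥(Jᶜ : Set V), X ↑v) × (∀ q : ↥J × Bool, X ↑q.1),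
    ∏ ω : ↥J → Bool, f (recomb X J p.1 p.2 ω)
    ∂((Measure.pi fun v : ↥(Jᶜ : Set V) => μ ↑v).prod
      (Measure.pi fun q : ↥J × Bool => μ ↑q.1))

/-- The seminorm `‖f‖_{U^{V,J}} = (UJint f)^{1/2^{|J|}}`. -/
def UJnorm {V : Type} [Fintype V] [DecidableEq V] (X : V → Type)
    [∀ v, MeasurableSpace (X v)] (μ : ∀ v, Measure (X v)) (J : Set V)
    (f : (∀ v, X v) → ℝ) : ℝ :=
  (UJint X μ J f) ^ ((1 : ℝ) / 2 ^ J.ncard)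

/-- The seminorm `‖f‖_{U^{V,𝓙}}`, an infimum over decompositions `f = Σ_i f_i` into
bounded measurable pieces. -/
def UFamNorm {V : Type} [Fintype V] [DecidableEq V] (X : V → Type)
    [∀ v, MeasurableSpace (X v)] (μ : ∀ v, Measure (X v)) (𝓙 : Finset (Set V))
    (f : (∀ v, X v) → ℝ) : ℝ :=
  sInf {r : ℝ | ∃ (m : ℕ) (g : ℕ → (∀ v, X v) → ℝ),
    (∀ i, (∃ C, ∀ x, |g i x| ≤ C) ∧ Measurable (g i)) ∧
    (∀ x, f x = ∑ i ∈ Finset.range (m + 1), g i x) ∧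
    r = ∑ i ∈ Finset.range (m + 1),
        (∏ J ∈ 𝓙, UJnorm X μ J (g i) ^ (2 ^ J.ncard)) ^
          ((1 : ℝ) / ∑ J ∈ 𝓙, (2 : ℝ) ^ J.ncard)}

/-- The σ-algebra `𝒞_I` on `X = ∏_v X_v` of sets depending only on the coordinates in `I`. -/
def cylAlg {V : Type} (X : V → Type) [∀ v, MeasurableSpace (X v)] (I : Set V) :
    MeasurableSpace (∀ v, X v) :=
  MeasurableSpace.comap (fun (x : ∀ v, X v) (i : ↥I) => x ↑i) MeasurableSpace.pi

/-
Fix `J ∈ 𝓙` and a coordinate `j ∈ J \ I`. Integrating first over the two copies `x_j^0, x_j^1`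
of the `j`-th coordinate gives `‖g‖_{U^{V,J}}^{2^|J|} = ∫ (∫ A_g(m, u) dμ_j(u))² dm`, where
`A_g(m, u)` is the product of `g` over the vertices of the cube on `J \ {j}` with `u` in
coordinate `j`. As `1_B` does not depend on `x_j`, `A_{g·1_B}(m, ·)` is either `A_g(m, ·)` or `0`,
so `‖g·1_B‖_{U^{V,J}} ≤ ‖g‖_{U^{V,J}}`. Hence every decomposition `f = Σ g_i` yields the
decomposition `f·1_B = Σ g_i·1_B` of no larger cost.
-/

section CubeSlice

variable {V : Type} (X : V → Type) {J : Set V} (i₀ : ↥J)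

/-- The vertex `σ` of the cube on `J \ {i₀}` built from `y` and the doubled coordinates `z`,
with `u` in coordinate `i₀`. -/
def slicePoint (y : ∀ v : ↥(Jᶜ : Set V), X v)
    (z : ∀ q : {q : ↥J × Bool // ¬q.1 = i₀}, X q.1.1) (u : X i₀)
    (σ : {i : ↥J // i ≠ i₀} → Bool) : ∀ v, X v := fun v =>
  if hv : v ∈ J then
    if hi : (⟨v, hv⟩ : ↥J) = i₀ then cast (congrArg (fun i : ↥J => X i) hi.symm) u
    else z ⟨(⟨v, hv⟩, σ ⟨⟨v, hv⟩, hi⟩), hi⟩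
  else y ⟨v, hv⟩

def sliceProd [Fintype V] [DecidableEq V] (h : (∀ v, X v) → ℝ) (y : ∀ v : ↥(Jᶜ : Set V), X v)
    (z : ∀ q : {q : ↥J × Bool // ¬q.1 = i₀}, X q.1.1) (u : X i₀) : ℝ :=
  ∏ σ : {i : ↥J // i ≠ i₀} → Bool, h (slicePoint X i₀ y z u σ)

variable {X}

theorem slicePoint_apply_of_ne (y : ∀ v : ↥(Jᶜ : Set V), X v)
    (z : ∀ q : {q : ↥J × Bool // ¬q.1 = i₀}, X q.1.1) (u u' : X i₀)
    (σ : {i : ↥J // i ≠ i₀} → Bool) {v : V} (hv : v ≠ i₀) :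
    slicePoint X i₀ y z u σ v = slicePoint X i₀ y z u' σ v := by
  unfold slicePoint
  split_ifs with hvJ hi
  · exact absurd (congrArg Subtype.val hi) hv
  all_goals rfl

theorem recomb_piEquivPiSubtypeProd_symm [DecidableEq V] (y : ∀ v : ↥(Jᶜ : Set V), X v)
    (zj : ∀ q : {q : ↥J × Bool // q.1 = i₀}, X q.1.1)
    (zr : ∀ q : {q : ↥J × Bool // ¬q.1 = i₀}, X q.1.1)
    (b : Bool) (σ : {i : ↥J // i ≠ i₀} → Bool) :
    recomb X J y ((Equiv.piEquivPiSubtypeProd (fun q : ↥J × Bool => q.1 = i₀) _).symm (zj, zr))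
        ((Equiv.funSplitAt i₀ Bool).symm (b, σ)) =
      slicePoint X i₀ y zr (zj ⟨(i₀, b), rfl⟩) σ := by
  funext v
  unfold recomb slicePoint
  by_cases hv : v ∈ J
  · rw [dif_pos hv, dif_pos hv, Equiv.piEquivPiSubtypeProd_symm_apply]
    by_cases hi : (⟨v, hv⟩ : ↥J) = i₀
    · subst hi
      simp only [dif_pos, cast_eq]
      congr
      simp
    · simp only [hi, dif_neg, not_false_eq_true]
      congr
      simp [hi]
  · rw [dif_neg hv, dif_neg hv]

theorem prod_recomb_eq_prod_sliceProd [Fintype V] [DecidableEq V] (h : (∀ v, X v) → ℝ)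
    (y : ∀ v : ↥(Jᶜ : Set V), X v) (zj : ∀ q : {q : ↥J × Bool // q.1 = i₀}, X q.1.1)
    (zr : ∀ q : {q : ↥J × Bool // ¬q.1 = i₀}, X q.1.1) :
    ∏ ω : ↥J → Bool,
        h (recomb X J y
          ((Equiv.piEquivPiSubtypeProd (fun q : ↥J × Bool => q.1 = i₀) _).symm (zj, zr)) ω) =
      ∏ b : Bool, sliceProd X i₀ h y zr (zj ⟨(i₀, b), rfl⟩) := by
  rw [← (Equiv.funSplitAt i₀ Bool).symm.prod_comp, Fintype.prod_prod_type]
  simp only [recomb_piEquivPiSubtypeProd_symm, sliceProd]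

theorem integral_prod_bool_eq_sq [Fintype V] [DecidableEq V] [∀ v, MeasurableSpace (X v)]
    (μ : ∀ v, Measure (X v)) [∀ v, SigmaFinite (μ v)] (F : X i₀ → ℝ) :
    ∫ zj, ∏ b : Bool, F (zj ⟨(i₀, b), rfl⟩)
        ∂(Measure.pi fun q : {q : ↥J × Bool // q.1 = i₀} => μ q.1.1) =
      (∫ u, F u ∂μ i₀) ^ 2 := by
  let e : Bool ≃ {q : ↥J × Bool // q.1 = i₀} :=
    { toFun b := ⟨(i₀, b), rfl⟩
      invFun q := q.1.2
      left_inv _ := rfl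
      right_inv := by rintro ⟨⟨i, b⟩, rfl⟩; rfl }
  rw [← (measurePreserving_piCongrLeft (fun q => μ q.1.1) e).integral_comp']
  simp only [MeasurableEquiv.coe_piCongrLeft]
  exact integral_fintype_prod_eq_pow (ι := Bool) (μ := μ i₀) F

end CubeSlice

theorem abs_prod_le_pow_card {ι : Type*} (s : Finset ι) {f : ι → ℝ} {C : ℝ}
    (hf : ∀ i ∈ s, |f i| ≤ C) : |∏ i ∈ s, f i| ≤ C ^ s.card := by
  rw [Finset.abs_prod, ← Finset.prod_const]
  exact Finset.prod_le_prod (fun i _ => abs_nonneg _) hf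

section CubeIntegral

variable {V : Type} {X : V → Type} [∀ v, MeasurableSpace (X v)] {J : Set V}

theorem measurable_recomb (ω : ↥J → Bool) :
    Measurable fun p : (∀ v : ↥(Jᶜ : Set V), X v) × (∀ q : ↥J × Bool, X q.1) =>
      recomb X J p.1 p.2 ω := by
  refine measurable_pi_lambda _ fun v => ?_
  unfold recomb
  split_ifs <;> fun_prop

theorem measurable_slicePoint (i₀ : ↥J) (σ : {i : ↥J // i ≠ i₀} → Bool) :
    Measurable fun p : ((∀ v : ↥(Jᶜ : Set V), X v) ×
        (∀ q : {q : ↥J × Bool // ¬q.1 = i₀}, X q.1.1)) × X i₀ =>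
      slicePoint X i₀ p.1.1 p.1.2 p.2 σ := by
  refine measurable_pi_lambda _ fun v => ?_
  unfold slicePoint
  split_ifs with hv hi
  · subst hi
    exact measurable_snd
  all_goals fun_prop

variable [Fintype V] [DecidableEq V] (μ : ∀ v, Measure (X v)) [∀ v, IsProbabilityMeasure (μ v)]

theorem integrable_sq_integral_sliceProd (i₀ : ↥J) {h : (∀ v, X v) → ℝ} (hm : Measurable h)
    {C : ℝ} (hb : ∀ x, |h x| ≤ C) :
    Integrable (fun m => (∫ u, sliceProd X i₀ h m.1 m.2 u ∂μ i₀) ^ 2)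
      ((Measure.pi fun v : ↥(Jᶜ : Set V) => μ v).prod
        (Measure.pi fun q : {q : ↥J × Bool // ¬q.1 = i₀} => μ q.1.1)) := by
  have hA : Measurable fun p : ((∀ v : ↥(Jᶜ : Set V), X v) ×
      (∀ q : {q : ↥J × Bool // ¬q.1 = i₀}, X q.1.1)) × X i₀ =>
        sliceProd X i₀ h p.1.1 p.1.2 p.2 :=
    Finset.measurable_prod _ fun σ _ => hm.comp (measurable_slicePoint i₀ σ)
  set D := C ^ (Finset.univ : Finset ({i : ↥J // i ≠ i₀} → Bool)).card
  have hAb : ∀ y z u, |sliceProd X i₀ h y z u| ≤ D :=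
    fun y z u => abs_prod_le_pow_card Finset.univ fun σ _ => hb _
  refine .of_bound
    (hA.stronglyMeasurable.integral_prod_right'.measurable.pow_const 2).aestronglyMeasurable
    (D ^ 2) (ae_of_all _ fun m => ?_)
  rw [Real.norm_eq_abs, abs_pow]
  refine pow_le_pow_left₀ (abs_nonneg _) ?_ 2
  simpa using norm_integral_le_of_norm_le_const (μ := μ i₀)
    (f := sliceProd X i₀ h m.1 m.2) (ae_of_all _ (hAb m.1 m.2))

theorem UJint_eq_integral_sq (i₀ : ↥J) {h : (∀ v, X v) → ℝ} (hm : Measurable h)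
    {C : ℝ} (hb : ∀ x, |h x| ≤ C) :
    UJint X μ J h = ∫ m, (∫ u, sliceProd X i₀ h m.1 m.2 u ∂μ i₀) ^ 2
      ∂((Measure.pi fun v : ↥(Jᶜ : Set V) => μ v).prod
        (Measure.pi fun q : {q : ↥J × Bool // ¬q.1 = i₀} => μ q.1.1)) := by
  have hΦ : Measurable fun p : (∀ v : ↥(Jᶜ : Set V), X v) × (∀ q : ↥J × Bool, X q.1) =>
      ∏ ω : ↥J → Bool, h (recomb X J p.1 p.2 ω) :=
    Finset.measurable_prod _ fun ω _ => hm.comp (measurable_recomb ω)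
  have hΦb : ∀ p : (∀ v : ↥(Jᶜ : Set V), X v) × (∀ q : ↥J × Bool, X q.1),
      |∏ ω : ↥J → Bool, h (recomb X J p.1 p.2 ω)| ≤ C ^ Fintype.card (↥J → Bool) :=
    fun p => abs_prod_le_pow_card _ fun ω _ => hb _
  let e := MeasurableEquiv.piEquivPiSubtypeProd (fun q : ↥J × Bool => X q.1) (fun q => q.1 = i₀)
  have he := (measurePreserving_piEquivPiSubtypeProd (fun q : ↥J × Bool => μ q.1) _).symm e
  unfold UJint
  rw [integral_prod _ (.of_bound hΦ.aestronglyMeasurable _ (ae_of_all _ hΦb)),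
    integral_prod _ (integrable_sq_integral_sliceProd μ i₀ hm hb)]
  congr 1
  funext y
  -- separate the two copies of the coordinate `i₀` from the other doubled coordinates
  rw [← he.integral_comp', integral_prod_symm]
  · congr 1
    funext zr
    simp only [e, MeasurableEquiv.piEquivPiSubtypeProd, MeasurableEquiv.symm_mk,
      MeasurableEquiv.coe_mk, prod_recomb_eq_prod_sliceProd]
    exact integral_prod_bool_eq_sq i₀ μ _
  · exact .of_bound
      ((hΦ.comp measurable_prodMk_left).comp e.symm.measurable).aestronglyMeasurable
      _ (ae_of_all _ fun p => hΦb _)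

end CubeIntegral

section Cylinder

variable {V : Type} {X : V → Type} [∀ v, MeasurableSpace (X v)] {I : Set V}
  {B : Set (∀ v, X v)}

theorem cylAlg_le : cylAlg X I ≤ MeasurableSpace.pi :=
  (measurable_pi_lambda (fun (x : ∀ v, X v) (i : ↥I) => x i) fun i =>
    measurable_pi_apply (i : V)).comap_le

theorem cylAlg_mem_congr (hB : MeasurableSet[cylAlg X I] B) {x x' : ∀ v, X v}
    (h : ∀ i ∈ I, x i = x' i) : x ∈ B ↔ x' ∈ B := by
  obtain ⟨S, -, rfl⟩ := hB
  simp only [Set.mem_preimage, show (fun i : ↥I => x i) = (fun i : ↥I => x' i) from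
    funext fun i => h i i.2]

theorem sliceProd_indicator_eq_or_eq_zero [Fintype V] [DecidableEq V] {J : Set V} (i₀ : ↥J)
    (hi₀ : (i₀ : V) ∉ I) (hB : MeasurableSet[cylAlg X I] B) (h : (∀ v, X v) → ℝ)
    (y : ∀ v : ↥(Jᶜ : Set V), X v) (z : ∀ q : {q : ↥J × Bool // ¬q.1 = i₀}, X q.1.1) :
    sliceProd X i₀ (B.indicator h) y z = sliceProd X i₀ h y z ∨
      sliceProd X i₀ (B.indicator h) y z = 0 := by
  by_cases hall : ∀ u σ, slicePoint X i₀ y z u σ ∈ B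
  · left
    funext u
    exact Finset.prod_congr rfl fun σ _ => Set.indicator_of_mem (hall u σ) h
  · right
    obtain ⟨u₁, σ₁, hσ₁⟩ : ∃ u σ, slicePoint X i₀ y z u σ ∉ B := by simpa using hall
    funext u
    refine Finset.prod_eq_zero (Finset.mem_univ σ₁) (Set.indicator_of_notMem ?_ h)
    rwa [cylAlg_mem_congr hB fun v hv =>
      slicePoint_apply_of_ne i₀ y z u u₁ σ₁ (ne_of_mem_of_not_mem hv hi₀)]

end Cylinder

section Norms

variable {V : Type} [Fintype V] [DecidableEq V] {X : V → Type} [∀ v, MeasurableSpace (X v)]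
  (μ : ∀ v, Measure (X v)) [∀ v, IsProbabilityMeasure (μ v)] {J : Set V}
  {h : (∀ v, X v) → ℝ}

theorem UJint_nonneg (i₀ : ↥J) (hm : Measurable h) {C : ℝ} (hb : ∀ x, |h x| ≤ C) :
    0 ≤ UJint X μ J h := by
  rw [UJint_eq_integral_sq μ i₀ hm hb]
  exact integral_nonneg fun m => sq_nonneg _

theorem UJint_indicator_le {I : Set V} (i₀ : ↥J) (hi₀ : (i₀ : V) ∉ I) {B : Set (∀ v, X v)}
    (hB : MeasurableSet[cylAlg X I] B) (hm : Measurable h) {C : ℝ} (hb : ∀ x, |h x| ≤ C) :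
    UJint X μ J (B.indicator h) ≤ UJint X μ J h := by
  have hbB : ∀ x, |B.indicator h x| ≤ C := fun x => (norm_indicator_le_norm_self h x).trans (hb x)
  rw [UJint_eq_integral_sq μ i₀ (hm.indicator (cylAlg_le B hB)) hbB,
    UJint_eq_integral_sq μ i₀ hm hb]
  refine integral_mono_of_nonneg (ae_of_all _ fun m => sq_nonneg _)
    (integrable_sq_integral_sliceProd μ i₀ hm hb) (ae_of_all _ fun m => ?_)
  dsimp only
  rcases sliceProd_indicator_eq_or_eq_zero i₀ hi₀ hB h m.1 m.2 with heq | heq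
  · rw [heq]
  · simp [heq, sq_nonneg]

theorem UJnorm_nonneg (hJ : J.Nonempty) (hm : Measurable h) {C : ℝ} (hb : ∀ x, |h x| ≤ C) :
    0 ≤ UJnorm X μ J h :=
  Real.rpow_nonneg (UJint_nonneg μ ⟨_, hJ.some_mem⟩ hm hb) _

theorem UJnorm_indicator_le {I : Set V} (hJI : ¬J ⊆ I) {B : Set (∀ v, X v)}
    (hB : MeasurableSet[cylAlg X I] B) (hm : Measurable h) {C : ℝ} (hb : ∀ x, |h x| ≤ C) :
    UJnorm X μ J (B.indicator h) ≤ UJnorm X μ J h := by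
  obtain ⟨j, hjJ, hjI⟩ := Set.not_subset.1 hJI
  have hbB : ∀ x, |B.indicator h x| ≤ C := fun x => (norm_indicator_le_norm_self h x).trans (hb x)
  exact Real.rpow_le_rpow (UJint_nonneg μ ⟨j, hjJ⟩ (hm.indicator (cylAlg_le B hB)) hbB)
    (UJint_indicator_le μ ⟨j, hjJ⟩ hjI hB hm hb) (by positivity)

end Norms

theorem UFamNorm_indicator_le_of_UJnorm_le {V : Type} [Fintype V] [DecidableEq V]
    {X : V → Type} [∀ v, MeasurableSpace (X v)] {μ : ∀ v, Measure (X v)}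
    {𝓙 : Finset (Set V)} {B : Set (∀ v, X v)} (hB : MeasurableSet B)
    {f : (∀ v, X v) → ℝ} (hfb : ∃ C, ∀ x, |f x| ≤ C) (hfm : Measurable f)
    (hnonneg : ∀ J ∈ 𝓙, ∀ g : (∀ v, X v) → ℝ,
      (∃ C, ∀ x, |g x| ≤ C) → Measurable g → 0 ≤ UJnorm X μ J g)
    (hle : ∀ J ∈ 𝓙, ∀ g : (∀ v, X v) → ℝ,
      (∃ C, ∀ x, |g x| ≤ C) → Measurable g → UJnorm X μ J (B.indicator g) ≤ UJnorm X μ J g) :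
    UFamNorm X μ 𝓙 (B.indicator f) ≤ UFamNorm X μ 𝓙 f := by
  unfold UFamNorm
  refine le_csInf ⟨_, 0, fun _ => f, fun _ => ⟨hfb, hfm⟩, fun x => by simp, rfl⟩ ?_
  rintro _ ⟨m, g, hg, hsum, rfl⟩
  have hgB : ∀ i, (∃ C, ∀ x, |B.indicator (g i) x| ≤ C) ∧ Measurable (B.indicator (g i)) :=
    fun i => by
      obtain ⟨C, hC⟩ := (hg i).1
      exact ⟨⟨C, fun x => (norm_indicator_le_norm_self (g i) x).trans (hC x)⟩,
        (hg i).2.indicator hB⟩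
  refine csInf_le_of_le ⟨0, ?_⟩ ⟨m, fun i => B.indicator (g i), hgB, fun x => ?_, rfl⟩ ?_
  · rintro _ ⟨m', g', hg', -, rfl⟩
    exact Finset.sum_nonneg fun i _ => Real.rpow_nonneg (Finset.prod_nonneg fun J hJ =>
      pow_nonneg (hnonneg J hJ _ (hg' i).1 (hg' i).2) _) _
  · by_cases hx : x ∈ B <;> simp [hx, hsum x]
  · gcongr with i _ J hJ
    · exact Finset.prod_nonneg fun J hJ => pow_nonneg (hnonneg J hJ _ (hgB i).1 (hgB i).2) _
    · exact fun J hJ => pow_nonneg (hnonneg J hJ _ (hgB i).1 (hgB i).2) _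
    · exact hnonneg J hJ _ (hgB i).1 (hgB i).2
    · exact hle J hJ _ (hg i).1 (hg i).2

theorem UFamNorm_indicator_le_general (V : Type) [Fintype V] [DecidableEq V]
    (X : V → Type) [∀ v, MeasurableSpace (X v)]
    (μ : ∀ v, Measure (X v)) [∀ v, IsProbabilityMeasure (μ v)]
    (𝓙 : Finset (Set V))
    (I : Set V) (hI : ∀ J ∈ 𝓙, ¬ J ⊆ I)
    (B : Set (∀ v, X v)) (hB : MeasurableSet[cylAlg X I] B)
    (f : (∀ v, X v) → ℝ) (hfb : ∃ C, ∀ x, |f x| ≤ C) (hfm : Measurable f) :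
    UFamNorm X μ 𝓙 (B.indicator f) ≤ UFamNorm X μ 𝓙 f := by
  refine UFamNorm_indicator_le_of_UJnorm_le (cylAlg_le B hB) hfb hfm ?_ ?_
  · rintro J hJ g ⟨C, hC⟩ hgm
    exact UJnorm_nonneg μ ((Set.nonempty_of_not_subset (hI J hJ)).mono Set.sdiff_subset) hgm hC
  · rintro J hJ g ⟨C, hC⟩ hgm
    exact UJnorm_indicator_le μ (hI J hJ) hB hgm hC

/-- If no `J ∈ 𝓙` is contained in `I` and `B ∈ 𝒞_I`, then
`‖f·1_B‖_{U^{V,𝓙}} ≤ ‖f‖_{U^{V,𝓙}}`. -/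
theorem UFamNorm_indicator_le (V : Type) [Fintype V] [DecidableEq V] [Nonempty V]
    (X : V → Type) [∀ v, MeasurableSpace (X v)]
    (μ : ∀ v, Measure (X v)) [∀ v, IsProbabilityMeasure (μ v)]
    (𝓙 : Finset (Set V)) (h𝓙 : 𝓙.Nonempty)
    (h𝓙ne : ∀ J ∈ 𝓙, J.Nonempty)
    (h𝓙anti : ∀ J ∈ 𝓙, ∀ J' ∈ 𝓙, J ⊆ J' → J = J')
    (I : Set V) (hI : ∀ J ∈ 𝓙, ¬ J ⊆ I)
    (B : Set (∀ v, X v)) (hB : MeasurableSet[cylAlg X I] B)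
    (f : (∀ v, X v) → ℝ) (hfb : ∃ C, ∀ x, |f x| ≤ C) (hfm : Measurable f) :
    UFamNorm X μ 𝓙 (B.indicator f) ≤ UFamNorm X μ 𝓙 f :=
  UFamNorm_indicator_le_general V X μ 𝓙 I hI B hB f hfb hfm

end
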